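/- For fixed real t, the function ε ↦ ψ(t, ε) is nonincreasing in ε > 0, where ψ(t, ε) = t²/2 − κ ε|t|³ for |t| ≤ θ₀/ε, ψ(t, ε) = (1 − cos(εt))/ε² for θ₀ < ε|t| ≤ 2π, and ψ(t, ε) = 0 for |t| > 2π/ε. -/

import Mathlib

/-!
Writing `u = ε|t|`, one has `ψ(t, ε) = t² g(u)` with the profile `g(u) = 1/2 − κu` for `u ≤ θ₀`,
`(1 − cos u)/u²` for `θ₀ < u ≤ 2π` and `0` beyond, so it suffices that `g` is antitone. The
linear piece is antitone since `κ ≥ 0`; on `[π, 2π]` both `1 − cos u ≥ 0` and `1/u²` decrease; the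
choice of `κ` makes the first two pieces agree at `θ₀`, and the last two agree at `2π`.
-/

open Real

noncomputable def psi (θ₀ κ t ε : ℝ) : ℝ :=
  if ε * |t| ≤ θ₀ then t ^ 2 / 2 - κ * ε * |t| ^ 3
  else if ε * |t| ≤ 2 * π then (1 - Real.cos (ε * t)) / ε ^ 2
  else 0

open Set

noncomputable def psiProfile (θ₀ κ u : ℝ) : ℝ :=
  if u ≤ θ₀ then 1 / 2 - κ * u
  else if u ≤ 2 * π then (1 - cos u) / u ^ 2
  else 0

theorem cos_mul_abs (ε t : ℝ) : cos (ε * |t|) = cos (ε * t) := by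
  rcases abs_choice t with h | h <;> simp [h]

-- With the junk value `x / 0 = 0`, this holds also for `t = 0` or `ε = 0`.
theorem psi_eq_sq_mul_psiProfile (θ₀ κ t ε : ℝ) :
    psi θ₀ κ t ε = t ^ 2 * psiProfile θ₀ κ (ε * |t|) := by
  unfold psi psiProfile
  split_ifs
  · rw [pow_succ |t| 2, sq_abs]
    ring
  · rcases eq_or_ne t 0 with rfl | ht
    · simp
    rw [cos_mul_abs, mul_pow, sq_abs]
    field_simp
  · ring

theorem cos_monotoneOn_Icc_pi_two_pi : MonotoneOn cos (Icc π (2 * π)) := by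
  intro u hu v hv huv
  rw [← cos_two_pi_sub u, ← cos_two_pi_sub v]
  exact cos_le_cos_of_nonneg_of_le_pi (by linarith [hv.2]) (by linarith [hu.1]) (by linarith)

theorem one_sub_cos_div_sq_antitoneOn :
    AntitoneOn (fun u : ℝ => (1 - cos u) / u ^ 2) (Icc π (2 * π)) := by
  intro u hu v hv huv
  have hu₀ : 0 < u := pi_pos.trans_le hu.1
  have hcos := cos_monotoneOn_Icc_pi_two_pi hu hv huv
  have hcos_le := cos_le_one u
  dsimp only
  gcongr

theorem one_sub_cos_div_sq_le_half (u : ℝ) : (1 - cos u) / u ^ 2 ≤ 1 / 2 := by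
  rcases eq_or_ne u 0 with rfl | hu
  · norm_num
  rw [div_le_iff₀ (by positivity)]
  linarith [one_sub_sq_div_two_le_cos (x := u)]

section Profile

variable {θ₀ κ : ℝ}

theorem nonneg_of_half_sub_mul_eq (hθ₀ : 0 < θ₀)
    (hκ : 1 / 2 - κ * θ₀ = (1 - cos θ₀) / θ₀ ^ 2) : 0 ≤ κ := by
  have := one_sub_cos_div_sq_le_half θ₀
  nlinarith

theorem psiProfile_antitone (hθ : θ₀ ∈ Icc π (2 * π))
    (hκ : 1 / 2 - κ * θ₀ = (1 - cos θ₀) / θ₀ ^ 2) : Antitone (psiProfile θ₀ κ) := by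
  have hθ₀ : 0 < θ₀ := pi_pos.trans_le hθ.1
  have hκ₀ := nonneg_of_half_sub_mul_eq hθ₀ hκ
  have linear : AntitoneOn (psiProfile θ₀ κ) (Iic θ₀) := by
    intro u hu v hv huv
    simp only [psiProfile, if_pos (mem_Iic.mp hu), if_pos (mem_Iic.mp hv)]
    nlinarith
  have onTrig : EqOn (psiProfile θ₀ κ) (fun u => (1 - cos u) / u ^ 2) (Icc θ₀ (2 * π)) := by
    intro u hu
    rcases hu.1.eq_or_lt with rfl | hlt
    · simpa [psiProfile] using hκ
    · simp [psiProfile, not_le.mpr hlt, hu.2]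
  have trig : AntitoneOn (psiProfile θ₀ κ) (Icc θ₀ (2 * π)) :=
    (one_sub_cos_div_sq_antitoneOn.mono (Icc_subset_Icc_left hθ.1)).congr onTrig.symm
  have zero : AntitoneOn (psiProfile θ₀ κ) (Ici (2 * π)) := by
    have heq : EqOn (psiProfile θ₀ κ) 0 (Ici (2 * π)) := by
      intro u hu
      rcases (mem_Ici.mp hu).eq_or_lt with rfl | hlt
      · simpa using onTrig ⟨hθ.2, le_rfl⟩
      · simp [psiProfile, not_le.mpr (hθ.2.trans_lt hlt), not_le.mpr hlt]
    exact antitoneOn_const.congr heq.symm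
  have below := linear.union_right trig isGreatest_Iic (isLeast_Icc hθ.2)
  rw [Iic_union_Icc_eq_Iic hθ.2] at below
  exact below.Iic_union_Ici zero

end Profile

theorem stmt_17_general (θ₀ κ : ℝ)
    (hθ : θ₀ ∈ Set.Icc π (2 * π))
    (hκ : κ = θ₀⁻¹ ^ 3 * (Real.cos θ₀ - 1 + θ₀ ^ 2 / 2))
    (t : ℝ) :
    ∀ ε₁ ε₂ : ℝ, 0 < ε₁ → ε₁ ≤ ε₂ → psi θ₀ κ t ε₂ ≤ psi θ₀ κ t ε₁ := by
  intro ε₁ ε₂ _ h12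
  have hθ₀ : θ₀ ≠ 0 := (pi_pos.trans_le hθ.1).ne'
  have hcont : 1 / 2 - κ * θ₀ = (1 - cos θ₀) / θ₀ ^ 2 := by
    rw [hκ]
    field_simp
    ring
  rw [psi_eq_sq_mul_psiProfile, psi_eq_sq_mul_psiProfile]
  exact mul_le_mul_of_nonneg_left
    (psiProfile_antitone hθ hcont (mul_le_mul_of_nonneg_right h12 (abs_nonneg t))) (sq_nonneg t)

theorem stmt_17 (θ₀ κ : ℝ)
    (hθ : θ₀ ∈ Set.Icc π (2 * π))
    (hroot : θ₀ ^ 2 + 2 * θ₀ * Real.sin θ₀ + 6 * (Real.cos θ₀ - 1) = 0)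
    (hκ : κ = θ₀⁻¹ ^ 3 * (Real.cos θ₀ - 1 + θ₀ ^ 2 / 2))
    (t : ℝ) :
    ∀ ε₁ ε₂ : ℝ, 0 < ε₁ → ε₁ ≤ ε₂ → psi θ₀ κ t ε₂ ≤ psi θ₀ κ t ε₁ :=
  stmt_17_general θ₀ κ hθ hκ t
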